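/- arXiv:1803.08423 — 2 statements merged into one kernel-verified Lean document; each statement's English description precedes it below -/
import Mathlib

section
/- Let G be a finite d-regular graph with two legal edge colorings c₁ and c₂, and let p : Ḡ → G be a finite graph covering. If (G,c₁) and (G,c₂) are edge Kempe equivalent, then (Ḡ, c₁∘p) and (Ḡ, c₂∘p) are edge Kempe equivalent. -/
/-!
A covering `p : G' → G` is in particular a graph homomorphism, and a homomorphism maps every
component of `(G', c ∘ p)[i,j]` into a component of `(G, c)[i,j]`. So the pull-back of the
Kempe switch of a bichromatic cycle `γ` of `(G, c)` swaps `i` and `j` on all the components of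
`(G', c ∘ p)[i,j]` lying over `γ`. Since `G'` is finite these are finitely many pairwise
edge-disjoint components, and they can be switched one at a time: a Kempe switch of type `i,j`
does not change the subgraph `[i,j]`, so the components not yet switched are still bichromatic
cycles of the new coloring.
-/

/-- A graph is `d`-regular: every vertex has exactly `d` neighbors. -/
def RegularDeg {V : Type} (G : SimpleGraph V) (d : ℕ) : Prop :=
  ∀ v : V, (G.neighborSet v).ncard = d

/-- A legal edge coloring of `G` with colors `{1, …, d}`: every edge receives a color in
`{1, …, d}` and any two distinct edges sharing a vertex receive distinct colors. -/
def IsLegal {V : Type} (G : SimpleGraph V) (d : ℕ) (c : Sym2 V → ℕ) : Prop :=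
  (∀ e ∈ G.edgeSet, c e ∈ Finset.Icc 1 d) ∧
    ∀ ⦃u v w : V⦄, G.Adj u v → G.Adj u w → v ≠ w → c s(u, v) ≠ c s(u, w)

/-- The set of edges of `G` colored `i` by `c`; the edge set of the spanning subgraph `(G,c)[i]`. -/
def colorEdges {V : Type} (G : SimpleGraph V) (c : Sym2 V → ℕ) (i : ℕ) : Set (Sym2 V) :=
  {e | e ∈ G.edgeSet ∧ c e = i}

/-- The spanning subgraph `(G,c)[i,j]` of all edges colored `i` or `j`. -/
def biSub {V : Type} (G : SimpleGraph V) (c : Sym2 V → ℕ) (i j : ℕ) : SimpleGraph V :=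
  SimpleGraph.fromEdgeSet (colorEdges G c i ∪ colorEdges G c j)

/-- `γ` is a bi-chromatic cycle of `(G,c)` of type `i,j`: `i ≠ j` and `γ` is the (nonempty)
edge set of a connected component of the spanning subgraph `(G,c)[i,j]`. -/
def IsBichromaticCycle {V : Type} (G : SimpleGraph V) (c : Sym2 V → ℕ) (i j : ℕ)
    (γ : Set (Sym2 V)) : Prop :=
  i ≠ j ∧ γ.Nonempty ∧
    ∃ K : (biSub G c i j).ConnectedComponent,
      γ = {e | e ∈ (biSub G c i j).edgeSet ∧
        ∀ v ∈ e, (biSub G c i j).connectedComponentMk v = K}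

open scoped Classical in
/-- The edge Kempe switch: swap colors `i` and `j` on the edges of `γ`, leaving other
edges unchanged. -/
noncomputable def kempeSwitch {V : Type} (i j : ℕ) (γ : Set (Sym2 V)) (c : Sym2 V → ℕ) :
    Sym2 V → ℕ :=
  fun e => if e ∈ γ then (if c e = i then j else if c e = j then i else c e) else c e

/-- Two colorings agree on all edges of `G` (i.e. they are equal as edge colorings). -/
def EdgeEqOn {V : Type} (G : SimpleGraph V) (c c' : Sym2 V → ℕ) : Prop :=
  ∀ e ∈ G.edgeSet, c e = c' e

/-- Edge Kempe equivalence: `c'` is obtained from `c` by a finite sequence of edge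
Kempe switches (colorings are regarded as functions on the edge set of `G`). -/
def KempeEquiv {V : Type} (G : SimpleGraph V) (c c' : Sym2 V → ℕ) : Prop :=
  Relation.ReflTransGen
    (fun a b => EdgeEqOn G a b ∨
      ∃ i j γ, IsBichromaticCycle G a i j γ ∧ b = kempeSwitch i j γ a) c c'

/-- `p : V' → V` is a graph covering `G' → G`: it is surjective and induces a bijection
between the neighbors of `v'` (equivalently, the edges incident at `v'`) and the neighbors
of `p v'`, for every vertex `v'`. -/
def IsCovering {V' V : Type} (G' : SimpleGraph V') (G : SimpleGraph V) (p : V' → V) : Prop :=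
  Function.Surjective p ∧ ∀ v' : V', Set.BijOn p (G'.neighborSet v') (G.neighborSet (p v'))

/-- The edge set of `G_s`: edges colored `d` by both `c₁` and `c₂`. -/
def sEdges {V : Type} (G : SimpleGraph V) (c₁ c₂ : Sym2 V → ℕ) (d : ℕ) : Set (Sym2 V) :=
  colorEdges G c₁ d ∩ colorEdges G c₂ d

/-- The edge set of `G_r`: edges colored `d` by exactly one of `c₁`, `c₂`. -/
def rEdges {V : Type} (G : SimpleGraph V) (c₁ c₂ : Sym2 V → ℕ) (d : ℕ) : Set (Sym2 V) :=
  (colorEdges G c₁ d ∪ colorEdges G c₂ d) \ sEdges G c₁ c₂ d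

open SimpleGraph

variable {V V' : Type}

def componentsEdgeSet (H : SimpleGraph V) (S : Set H.ConnectedComponent) : Set (Sym2 V) :=
  {e | e ∈ H.edgeSet ∧ ∀ v ∈ e, H.connectedComponentMk v ∈ S}

section Components

variable {H : SimpleGraph V}

theorem connectedComponentMk_eq_of_mem_edgeSet {e : Sym2 V} (he : e ∈ H.edgeSet) {u v : V}
    (hu : u ∈ e) (hv : v ∈ e) : H.connectedComponentMk u = H.connectedComponentMk v := by
  induction e using Sym2.ind with
  | _ a b =>
    have hab : H.connectedComponentMk a = H.connectedComponentMk b :=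
      ConnectedComponent.connectedComponentMk_eq_of_adj he
    rcases Sym2.mem_iff.mp hu with rfl | rfl <;> rcases Sym2.mem_iff.mp hv with rfl | rfl
    all_goals first | rfl | exact hab | exact hab.symm

theorem componentsEdgeSet_insert (K : H.ConnectedComponent) (S : Set H.ConnectedComponent) :
    componentsEdgeSet H (insert K S) = componentsEdgeSet H {K} ∪ componentsEdgeSet H S := by
  ext e
  constructor
  · rintro ⟨he, hS⟩
    have hsame := fun v (hv : v ∈ e) =>
      connectedComponentMk_eq_of_mem_edgeSet he hv e.out_fst_mem
    rcases hS _ e.out_fst_mem with hK | hS'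
    · exact Or.inl ⟨he, fun v hv => (hsame v hv).trans hK⟩
    · exact Or.inr ⟨he, fun v hv => hsame v hv ▸ hS'⟩
  · rintro (⟨he, hK⟩ | ⟨he, hS⟩)
    · exact ⟨he, fun v hv => Or.inl (hK v hv)⟩
    · exact ⟨he, fun v hv => Or.inr (hS v hv)⟩

theorem disjoint_componentsEdgeSet {K : H.ConnectedComponent} {S : Set H.ConnectedComponent}
    (hK : K ∉ S) : Disjoint (componentsEdgeSet H {K}) (componentsEdgeSet H S) := by
  refine Set.disjoint_left.mpr fun e ⟨_, he⟩ ⟨_, he'⟩ => hK ?_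
  exact he e.out.1 e.out_fst_mem ▸ he' e.out.1 e.out_fst_mem

end Components

section KempeSwitch

variable {i j : ℕ} {c : Sym2 V → ℕ}

theorem kempeSwitch_empty : kempeSwitch i j (∅ : Set (Sym2 V)) c = c := by
  funext e
  simp [kempeSwitch]

theorem kempeSwitch_union {A B : Set (Sym2 V)} (hAB : Disjoint A B) :
    kempeSwitch i j (A ∪ B) c = kempeSwitch i j B (kempeSwitch i j A c) := by
  funext e
  by_cases hA : e ∈ A
  · have hB : e ∉ B := Set.disjoint_left.mp hAB hA
    simp [kempeSwitch, hA, hB]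
  · have hmem : e ∈ A ∪ B ↔ e ∈ B := by simp [hA]
    by_cases hB : e ∈ B
    · simp only [kempeSwitch, if_pos (hmem.mpr hB), if_neg hA, if_pos hB]
    · simp only [kempeSwitch, if_neg (mt hmem.mp hB), if_neg hA, if_neg hB]

theorem kempeSwitch_eq_or_eq_iff {γ : Set (Sym2 V)} {e : Sym2 V} :
    (kempeSwitch i j γ c e = i ∨ kempeSwitch i j γ c e = j) ↔ (c e = i ∨ c e = j) := by
  unfold kempeSwitch
  split_ifs <;> tauto

theorem kempeSwitch_comp_apply {E : Set (Sym2 V')} {γ : Set (Sym2 V)} {g : Sym2 V' → Sym2 V}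
    {e : Sym2 V'} (he : e ∈ E ↔ g e ∈ γ) :
    kempeSwitch i j E (c ∘ g) e = kempeSwitch i j γ c (g e) := by
  by_cases hγ : g e ∈ γ
  · simp only [kempeSwitch, he, hγ, if_true, Function.comp_apply]
  · simp only [kempeSwitch, he, hγ, if_false, Function.comp_apply]

theorem mem_biSub_edgeSet {G : SimpleGraph V} {e : Sym2 V} :
    e ∈ (biSub G c i j).edgeSet ↔ e ∈ G.edgeSet ∧ (c e = i ∨ c e = j) := by
  simp only [biSub, colorEdges, edgeSet_fromEdgeSet, Set.mem_sdiff, Set.mem_union,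
    Set.mem_ofPred_eq]
  constructor
  · rintro ⟨⟨he, hc⟩ | ⟨he, hc⟩, -⟩ <;> tauto
  · rintro ⟨he, hc⟩
    exact ⟨by tauto, G.not_isDiag_of_mem_edgeSet he⟩

theorem biSub_kempeSwitch (G : SimpleGraph V) (γ : Set (Sym2 V)) :
    biSub G (kempeSwitch i j γ c) i j = biSub G c i j := by
  refine SimpleGraph.edgeSet_injective (Set.ext fun e => ?_)
  rw [mem_biSub_edgeSet, mem_biSub_edgeSet, kempeSwitch_eq_or_eq_iff]

end KempeSwitch

section KempeEquiv

variable {G : SimpleGraph V} {i j : ℕ} {H : SimpleGraph V}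

theorem kempeEquiv_kempeSwitch_component (hij : i ≠ j) {c : Sym2 V → ℕ}
    (hH : biSub G c i j = H) (K : H.ConnectedComponent) :
    KempeEquiv G c (kempeSwitch i j (componentsEdgeSet H {K}) c) := by
  subst hH
  rcases (componentsEdgeSet (biSub G c i j) {K}).eq_empty_or_nonempty with hγ | hγ
  · rw [hγ, kempeSwitch_empty]
    exact Relation.ReflTransGen.refl
  · exact Relation.ReflTransGen.single (Or.inr ⟨i, j, _, ⟨hij, hγ, K, rfl⟩, rfl⟩)

theorem kempeEquiv_kempeSwitch_components (hij : i ≠ j) {S : Set H.ConnectedComponent}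
    (hS : S.Finite) {c : Sym2 V → ℕ} (hH : biSub G c i j = H) :
    KempeEquiv G c (kempeSwitch i j (componentsEdgeSet H S) c) := by
  induction S, hS using Set.Finite.induction_on generalizing c with
  | empty =>
    rw [show componentsEdgeSet H ∅ = ∅ from Set.eq_empty_of_forall_notMem
      fun e ⟨_, he⟩ => he e.out.1 e.out_fst_mem, kempeSwitch_empty]
    exact Relation.ReflTransGen.refl
  | @insert K S hK _ ih =>
    rw [componentsEdgeSet_insert, kempeSwitch_union (disjoint_componentsEdgeSet hK)]
    -- the first switch leaves `[i,j]`, hence its components, unchanged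
    exact (kempeEquiv_kempeSwitch_component hij hH K).trans
      (ih ((biSub_kempeSwitch G _).trans hH))

end KempeEquiv

section Comap

variable {G : SimpleGraph V} {G' : SimpleGraph V'} {i j : ℕ} {c : Sym2 V → ℕ}

def SimpleGraph.Hom.biSub (f : G' →g G) (c : Sym2 V → ℕ) (i j : ℕ) :
    _root_.biSub G' (c ∘ Sym2.map f) i j →g _root_.biSub G c i j where
  toFun := f
  map_rel' {u v} huv := by
    rw [← mem_edgeSet, mem_biSub_edgeSet] at huv ⊢
    exact ⟨f.map_mem_edgeSet huv.1, huv.2⟩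

theorem mem_componentsEdgeSet_comap (f : G' →g G) {S : Set (biSub G c i j).ConnectedComponent}
    {e : Sym2 V'} (he : e ∈ G'.edgeSet) :
    e ∈ componentsEdgeSet (biSub G' (c ∘ Sym2.map f) i j)
        (ConnectedComponent.map (f.biSub c i j) ⁻¹' S) ↔
      Sym2.map f e ∈ componentsEdgeSet (biSub G c i j) S := by
  simp only [componentsEdgeSet, mem_biSub_edgeSet, Set.mem_ofPred_eq, Set.mem_preimage,
    ConnectedComponent.map_mk, Function.comp_apply, Sym2.mem_map, forall_exists_index,
    and_imp, forall_apply_eq_imp_iff₂, he, f.map_mem_edgeSet he, true_and]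
  rfl

theorem EdgeEqOn.comap (f : G' →g G) {a b : Sym2 V → ℕ} (h : EdgeEqOn G a b) :
    EdgeEqOn G' (a ∘ Sym2.map f) (b ∘ Sym2.map f) :=
  fun _ he => h _ (f.map_mem_edgeSet he)

theorem kempeEquiv_comap_kempeSwitch [Finite V'] (f : G' →g G) {γ : Set (Sym2 V)}
    (hγ : IsBichromaticCycle G c i j γ) :
    KempeEquiv G' (c ∘ Sym2.map f) (kempeSwitch i j γ c ∘ Sym2.map f) := by
  obtain ⟨hij, -, K, rfl⟩ := hγ
  refine (kempeEquiv_kempeSwitch_components hij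
    (Set.toFinite (ConnectedComponent.map (f.biSub c i j) ⁻¹' {K})) rfl).tail
    (Or.inl fun e he => ?_)
  exact kempeSwitch_comp_apply (mem_componentsEdgeSet_comap f he)

theorem KempeEquiv.comap [Finite V'] (f : G' →g G) {c₁ c₂ : Sym2 V → ℕ}
    (h : KempeEquiv G c₁ c₂) : KempeEquiv G' (c₁ ∘ Sym2.map f) (c₂ ∘ Sym2.map f) := by
  induction h with
  | refl => exact Relation.ReflTransGen.refl
  | tail _ hstep ih =>
    rcases hstep with hab | ⟨i, j, γ, hγ, rfl⟩
    · exact ih.tail (Or.inl (hab.comap f))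
    · exact ih.trans (kempeEquiv_comap_kempeSwitch f hγ)

end Comap

theorem statement_8_general {V V' : Type} [Fintype V'] (G : SimpleGraph V)
    (G' : SimpleGraph V') (c₁ c₂ : Sym2 V → ℕ) (p : V' → V)
    (hp : IsCovering G' G p) (h : KempeEquiv G c₁ c₂) :
    KempeEquiv G' (c₁ ∘ Sym2.map p) (c₂ ∘ Sym2.map p) :=
  h.comap (G' := G') ⟨p, fun huv => (hp.2 _).mapsTo huv⟩

/-- Edge Kempe equivalence is preserved under pulling back along a finite graph
covering. -/
theorem statement_8 {V V' : Type} [Fintype V] [Fintype V'] (G : SimpleGraph V)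
    (G' : SimpleGraph V') (d : ℕ) (c₁ c₂ : Sym2 V → ℕ) (p : V' → V)
    (hreg : RegularDeg G d) (h1 : IsLegal G d c₁) (h2 : IsLegal G d c₂)
    (hp : IsCovering G' G p) (h : KempeEquiv G c₁ c₂) :
    KempeEquiv G' (c₁ ∘ Sym2.map p) (c₂ ∘ Sym2.map p) :=
  statement_8_general G G' c₁ c₂ p hp h
end

section
/- Let d ≥ 2 and let G be a finite d-regular graph with two legal edge colorings c₁ and c₂. Let G_s = (G,c₁)[d] ∩ (G,c₂)[d] and G_r = ((G,c₁)[d] ∪ (G,c₂)[d]) \ G_s. Then there exists a graph covering p : Ḡ → G with |p⁻¹(v)| = d−1 for every vertex v of G, and a legal edge coloring c̄ of Ḡ, such that (Ḡ, c₁∘p)[d] = (Ḡ, c̄)[d] and the preimage p⁻¹(G_r) is a disjoint union of bi-chromatic cycles of (Ḡ, c̄). -/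
open SimpleGraph

section Components

variable {α : Type}

lemma SimpleGraph.Reachable.propagate {B : SimpleGraph α} {P : α → Prop}
    (hP : ∀ ⦃y z⦄, B.Adj y z → P y → P z) {x v : α} (h : B.Reachable x v) (hx : P x) : P v := by
  rw [reachable_iff_reflTransGen] at h
  induction h with
  | refl => exact hx
  | tail _ hyz ih => exact hP hyz ih

def componentEdges (B : SimpleGraph α) (x : α) : Set (Sym2 α) :=
  {e | e ∈ B.edgeSet ∧ ∀ v ∈ e, B.connectedComponentMk v = B.connectedComponentMk x}

lemma mk_mem_componentEdges {B : SimpleGraph α} {x y : α} (h : B.Adj x y) :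
    s(x, y) ∈ componentEdges B x := by
  refine ⟨h, fun v hv => ?_⟩
  rcases Sym2.mem_iff.1 hv with rfl | rfl
  · rfl
  · exact (ConnectedComponent.connectedComponentMk_eq_of_adj h).symm

lemma biSub_adj {G : SimpleGraph α} {c : Sym2 α → ℕ} {i j : ℕ} {x y : α} :
    (biSub G c i j).Adj x y ↔ G.Adj x y ∧ (c s(x, y) = i ∨ c s(x, y) = j) := by
  simp only [biSub, fromEdgeSet_adj, colorEdges, Set.mem_union, Set.mem_ofPred_eq, mem_edgeSet]
  constructor
  · rintro ⟨⟨h, hc⟩ | ⟨h, hc⟩, -⟩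
    exacts [⟨h, .inl hc⟩, ⟨h, .inr hc⟩]
  · rintro ⟨h, hc | hc⟩
    exacts [⟨.inl ⟨h, hc⟩, h.ne⟩, ⟨.inr ⟨h, hc⟩, h.ne⟩]

lemma isBichromaticCycle_componentEdges {G : SimpleGraph α} {c : Sym2 α → ℕ} {i j : ℕ}
    {x y : α} (hij : i ≠ j) (hxy : (biSub G c i j).Adj x y) :
    IsBichromaticCycle G c i j (componentEdges (biSub G c i j) x) :=
  ⟨hij, ⟨_, mk_mem_componentEdges hxy⟩, _, rfl⟩

end Components

namespace IsLegal

variable {α : Type} {G : SimpleGraph α} {d : ℕ} {c : Sym2 α → ℕ}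

lemma eq_of_color_eq (hc : IsLegal G d c) {u v w : α} (hv : G.Adj u v) (hw : G.Adj u w)
    (h : c s(u, v) = c s(u, w)) : v = w :=
  by_contra fun hne => hc.2 hv hw hne h

lemma exists_adj_color_eq (hc : IsLegal G d c) (hreg : RegularDeg G d) (u : α) {j : ℕ}
    (hj : j ∈ Finset.Icc 1 d) : ∃ v, G.Adj u v ∧ c s(u, v) = j := by
  have hinj : Set.InjOn (fun v => c s(u, v)) (G.neighborSet u) :=
    fun v hv w hw h => hc.eq_of_color_eq hv hw h
  have hcolors : (fun v => c s(u, v)) '' G.neighborSet u = ↑(Finset.Icc 1 d) := by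
    refine Set.eq_of_subset_of_ncard_le ?_ ?_ (Finset.finite_toSet _)
    · rintro _ ⟨v, hv, rfl⟩
      exact hc.1 _ hv
    · rw [hinj.ncard_image, hreg u, Set.ncard_coe_finset, Nat.card_Icc]
      omega
  rw [← Finset.mem_coe, ← hcolors] at hj
  exact hj

end IsLegal

section ShiftColor

variable {d : ℕ}

def shiftColor (d : ℕ) (ℓ : ZMod (d - 1)) (j : ℕ) : ℕ :=
  (((j - 1 : ℕ) : ZMod (d - 1)) + ℓ).val + 1

lemma shiftColor_lt [NeZero (d - 1)] (ℓ : ZMod (d - 1)) (j : ℕ) : shiftColor d ℓ j < d := by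
  have := ZMod.val_lt (((j - 1 : ℕ) : ZMod (d - 1)) + ℓ)
  unfold shiftColor
  omega

lemma shiftColor_injOn [NeZero (d - 1)] (ℓ : ZMod (d - 1)) :
    Set.InjOn (shiftColor d ℓ) (Set.Ico 1 d) := by
  intro j hj j' hj' h
  have hcast := congrArg ZMod.val (add_right_cancel (ZMod.val_injective _ (Nat.succ_injective h)))
  rw [ZMod.val_natCast_of_lt (by grind), ZMod.val_natCast_of_lt (by grind)] at hcast
  grind

lemma shiftColor_add_neg (k : ZMod (d - 1)) (j : ℕ) :
    shiftColor d (k + -((j - 1 : ℕ) : ZMod (d - 1))) j = k.val + 1 := by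
  simp [shiftColor]

end ShiftColor

section TwistedLift

variable {α : Type} (G : SimpleGraph α) (c : Sym2 α → ℕ) (d : ℕ) (a : α → ZMod (d - 1))

def twistedLift : SimpleGraph (α × ZMod (d - 1)) where
  Adj x y := G.Adj x.1 y.1 ∧
    if c s(x.1, y.1) = d then x.2 = y.2 else x.2 + a x.1 = y.2 + a y.1
  symm := ⟨fun x y ⟨h, h'⟩ => ⟨h.symm, by
    rw [Sym2.eq_swap]
    split_ifs at h' ⊢ <;> exact h'.symm⟩⟩
  loopless := ⟨fun _ h => G.loopless.irrefl _ h.1⟩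

/-- Pairs that are not edges of `twistedLift G c d a` get the junk value `d`. -/
def liftColoring : Sym2 (α × ZMod (d - 1)) → ℕ :=
  Sym2.lift ⟨fun x y => if c s(x.1, y.1) ≠ d ∧ x.2 + a x.1 = y.2 + a y.1
    then shiftColor d (x.2 + a x.1) (c s(x.1, y.1)) else d, fun x y => by
      simp only
      rw [Sym2.eq_swap (a := y.1)]
      by_cases h : x.2 + a x.1 = y.2 + a y.1 <;> simp [h, eq_comm]⟩

variable {G c d a}

lemma liftColoring_of_adj {x y : α × ZMod (d - 1)} (h : (twistedLift G c d a).Adj x y) :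
    liftColoring c d a s(x, y) =
      if c s(x.1, y.1) = d then d else shiftColor d (x.2 + a x.1) (c s(x.1, y.1)) := by
  have h' := h.2
  simp only [liftColoring, Sym2.lift_mk]
  split_ifs at h' ⊢ <;> tauto

lemma liftColoring_eq_iff [NeZero (d - 1)] {x y : α × ZMod (d - 1)}
    (h : (twistedLift G c d a).Adj x y) : liftColoring c d a s(x, y) = d ↔ c s(x.1, y.1) = d := by
  rw [liftColoring_of_adj h]
  split_ifs with hc
  · simpa
  · simpa [hc] using (shiftColor_lt _ _).ne

lemma twistedLift_eq_of_adj {x y z : α × ZMod (d - 1)} (hy : (twistedLift G c d a).Adj x y)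
    (hz : (twistedLift G c d a).Adj x z) (h : y.1 = z.1) : y = z := by
  have hy' := hy.2
  have hz' := hz.2
  rw [← h] at hz'
  refine Prod.ext h ?_
  split_ifs at hy' hz'
  · exact hy'.symm.trans hz'
  · exact add_right_cancel (hy'.symm.trans hz')

lemma isCovering_twistedLift : IsCovering (twistedLift G c d a) G Prod.fst := by
  refine ⟨fun v => ⟨(v, 0), rfl⟩, fun x =>
    ⟨fun y hy => hy.1, fun y hy z hz h => twistedLift_eq_of_adj hy hz h, fun w hw => ?_⟩⟩
  refine ⟨(w, if c s(x.1, w) = d then x.2 else x.2 + a x.1 - a w), ⟨hw, ?_⟩, rfl⟩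
  split_ifs <;> simp

lemma ncard_fst_preimage [NeZero (d - 1)] (v : α) :
    (Prod.fst ⁻¹' {v} : Set (α × ZMod (d - 1))).ncard = d - 1 := by
  rw [Set.preimage_fst_singleton_eq_range, Set.ncard_range_of_injective (Prod.mk_right_injective v),
    Nat.card_zmod]

lemma isLegal_liftColoring [NeZero (d - 1)] (hc : IsLegal G d c) :
    IsLegal (twistedLift G c d a) d (liftColoring c d a) := by
  refine ⟨fun e he => ?_, fun x y z hy hz hyz => ?_⟩
  · induction e with
    | _ x y =>
      rw [liftColoring_of_adj he, Finset.mem_Icc]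
      split_ifs
      · exact ⟨by have := NeZero.ne (d - 1); omega, le_rfl⟩
      · exact ⟨Nat.succ_pos _, (shiftColor_lt _ _).le⟩
  · have hcol := hc.2 hy.1 hz.1 fun h => hyz (twistedLift_eq_of_adj hy hz h)
    have hcy := Finset.mem_Icc.1 (hc.1 s(x.1, y.1) hy.1)
    have hcz := Finset.mem_Icc.1 (hc.1 s(x.1, z.1) hz.1)
    rw [liftColoring_of_adj hy, liftColoring_of_adj hz]
    split_ifs with hdy hdz hdz
    · exact absurd (hdy.trans hdz.symm) hcol
    · exact (shiftColor_lt _ _).ne'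
    · exact (shiftColor_lt _ _).ne
    · exact fun h => hcol (shiftColor_injOn _ ⟨hcy.1, by omega⟩ ⟨hcz.1, by omega⟩ h)

lemma colorEdges_liftColoring [NeZero (d - 1)] :
    colorEdges (twistedLift G c d a) (c ∘ Sym2.map Prod.fst) d =
      colorEdges (twistedLift G c d a) (liftColoring c d a) d := by
  ext e
  induction e with
  | _ x y => exact and_congr_right fun he => (liftColoring_eq_iff he).symm

end TwistedLift

section RecoloredEdges

variable {α : Type} {G : SimpleGraph α} {d : ℕ} {c₁ c₂ : Sym2 α → ℕ} {m : α → α}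

lemma mem_rEdges_iff {u v : α} (h : G.Adj u v) :
    s(u, v) ∈ rEdges G c₁ c₂ d ↔
      c₁ s(u, v) = d ∧ c₂ s(u, v) ≠ d ∨ c₂ s(u, v) = d ∧ c₁ s(u, v) ≠ d := by
  simp only [rEdges, sEdges, colorEdges, Set.mem_sdiff, Set.mem_union, Set.mem_inter_iff,
    Set.mem_ofPred_eq, mem_edgeSet, h, true_and]
  tauto

lemma eq_of_color_eq_partner (h2 : IsLegal G d c₂) (hm : ∀ u, G.Adj u (m u) ∧ c₂ s(u, m u) = d)
    {u v : α} (huv : G.Adj u v) (hc : c₂ s(u, v) = d) : v = m u :=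
  h2.eq_of_color_eq huv (hm u).1 (hc.trans (hm u).2.symm)

lemma partner_partner (h2 : IsLegal G d c₂) (hm : ∀ u, G.Adj u (m u) ∧ c₂ s(u, m u) = d)
    (u : α) : m (m u) = u :=
  (eq_of_color_eq_partner h2 hm (hm u).1.symm (by rw [Sym2.eq_swap]; exact (hm u).2)).symm

lemma color_partner_ne_of_mem_rEdges (h1 : IsLegal G d c₁) (h2 : IsLegal G d c₂)
    (hm : ∀ u, G.Adj u (m u) ∧ c₂ s(u, m u) = d) {u v : α} (huv : G.Adj u v)
    (hr : s(u, v) ∈ rEdges G c₁ c₂ d) : c₁ s(u, m u) ≠ d := by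
  intro hu
  rcases (mem_rEdges_iff huv).1 hr with ⟨hc₁, hc₂⟩ | ⟨hc₂, hc₁⟩
  · exact hc₂ (by rw [h1.eq_of_color_eq huv (hm u).1 (hc₁.trans hu.symm)]; exact (hm u).2)
  · exact hc₁ (by rw [eq_of_color_eq_partner h2 hm huv hc₂]; exact hu)

def voltage (c₁ : Sym2 α → ℕ) (m : α → α) (d : ℕ) (u : α) : ZMod (d - 1) :=
  -((c₁ s(u, m u) - 1 : ℕ) : ZMod (d - 1))

lemma voltage_partner (h2 : IsLegal G d c₂) (hm : ∀ u, G.Adj u (m u) ∧ c₂ s(u, m u) = d)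
    (u : α) : voltage c₁ m d (m u) = voltage c₁ m d u := by
  rw [voltage, voltage, partner_partner h2 hm, Sym2.eq_swap]

local notation "Ḡ" => twistedLift G c₁ d (voltage c₁ m d)
local notation "c̄" => liftColoring c₁ d (voltage c₁ m d)

lemma lift_adj_partner (h2 : IsLegal G d c₂) (hm : ∀ u, G.Adj u (m u) ∧ c₂ s(u, m u) = d)
    {u : α} (hu : c₁ s(u, m u) ≠ d) (k : ZMod (d - 1)) :
    Ḡ.Adj (u, k) (m u, k) ∧ c̄ s((u, k), (m u, k)) = k.val + 1 := by
  have hadj : Ḡ.Adj (u, k) (m u, k) := by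
    refine ⟨(hm u).1, ?_⟩
    rw [if_neg hu, voltage_partner h2 hm]
  exact ⟨hadj, by rw [liftColoring_of_adj hadj, if_neg hu]; exact shiftColor_add_neg k _⟩

lemma snd_eq_of_mem_rEdges (h2 : IsLegal G d c₂) (hm : ∀ u, G.Adj u (m u) ∧ c₂ s(u, m u) = d)
    {x z : α × ZMod (d - 1)} (hxz : Ḡ.Adj x z) (hr : s(x.1, z.1) ∈ rEdges G c₁ c₂ d) :
    z.2 = x.2 := by
  have hlevel := hxz.2
  rcases (mem_rEdges_iff hxz.1).1 hr with ⟨hc₁, -⟩ | ⟨hc₂, hc₁⟩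
  · rw [if_pos hc₁] at hlevel
    exact hlevel.symm
  · rw [if_neg hc₁, eq_of_color_eq_partner h2 hm hxz.1 hc₂, voltage_partner h2 hm] at hlevel
    exact (add_right_cancel hlevel).symm

lemma mem_rEdges_iff_liftColoring [NeZero (d - 1)] (h1 : IsLegal G d c₁)
    (h2 : IsLegal G d c₂) (hm : ∀ u, G.Adj u (m u) ∧ c₂ s(u, m u) = d)
    {x z : α × ZMod (d - 1)} (hx : c₁ s(x.1, m x.1) ≠ d) (hxz : Ḡ.Adj x z) :
    s(x.1, z.1) ∈ rEdges G c₁ c₂ d ↔ c̄ s(x, z) = x.2.val + 1 ∨ c̄ s(x, z) = d := by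
  obtain ⟨hpartner, hcolor⟩ := lift_adj_partner h2 hm hx x.2
  constructor
  · intro hr
    rcases (mem_rEdges_iff hxz.1).1 hr with ⟨hc₁, -⟩ | ⟨hc₂, -⟩
    · exact .inr ((liftColoring_eq_iff hxz).2 hc₁)
    · have hz : z = (m x.1, x.2) :=
        Prod.ext (eq_of_color_eq_partner h2 hm hxz.1 hc₂)
          (snd_eq_of_mem_rEdges (x := x) h2 hm hxz hr)
      exact .inl (hz ▸ hcolor)
  · rintro (hc | hc)
    · rw [(isLegal_liftColoring h1).eq_of_color_eq hxz hpartner (hc.trans hcolor.symm)]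
      exact (mem_rEdges_iff (hm x.1).1).2 (.inr ⟨(hm x.1).2, hx⟩)
    · refine (mem_rEdges_iff hxz.1).2 (.inl ⟨(liftColoring_eq_iff hxz).1 hc, fun hc₂ => hx ?_⟩)
      rw [← eq_of_color_eq_partner h2 hm hxz.1 hc₂]
      exact (liftColoring_eq_iff hxz).1 hc

lemma mem_rEdges_of_biSub_adj [NeZero (d - 1)] (h1 : IsLegal G d c₁)
    (h2 : IsLegal G d c₂) (hm : ∀ u, G.Adj u (m u) ∧ c₂ s(u, m u) = d)
    {x z : α × ZMod (d - 1)} (hx : c₁ s(x.1, m x.1) ≠ d)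
    (hxz : (biSub Ḡ c̄ (x.2.val + 1) d).Adj x z) :
    s(x.1, z.1) ∈ rEdges G c₁ c₂ d ∧ z.2 = x.2 ∧ c₁ s(z.1, m z.1) ≠ d := by
  obtain ⟨hadj, hcol⟩ := biSub_adj.1 hxz
  have hr := (mem_rEdges_iff_liftColoring h1 h2 hm hx hadj).2 hcol
  refine ⟨hr, snd_eq_of_mem_rEdges h2 hm hadj hr,
    color_partner_ne_of_mem_rEdges h1 h2 hm hadj.1.symm ?_⟩
  rwa [Sym2.eq_swap]

lemma snd_eq_of_biSub_reachable [NeZero (d - 1)] (h1 : IsLegal G d c₁)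
    (h2 : IsLegal G d c₂) (hm : ∀ u, G.Adj u (m u) ∧ c₂ s(u, m u) = d)
    {x v : α × ZMod (d - 1)} (hx : c₁ s(x.1, m x.1) ≠ d)
    (h : (biSub Ḡ c̄ (x.2.val + 1) d).Reachable x v) : v.2 = x.2 ∧ c₁ s(v.1, m v.1) ≠ d := by
  refine h.propagate (P := fun v => v.2 = x.2 ∧ c₁ s(v.1, m v.1) ≠ d)
    (fun y z hyz ⟨hy, hy'⟩ => ?_) ⟨rfl, hx⟩
  rw [← hy] at hyz
  obtain ⟨-, hz, hz'⟩ := mem_rEdges_of_biSub_adj h1 h2 hm hy' hyz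
  exact ⟨hz.trans hy, hz'⟩

def rCycles (G : SimpleGraph α) (c₁ : Sym2 α → ℕ) (m : α → α) (d : ℕ) :
    Set (Set (Sym2 (α × ZMod (d - 1)))) :=
  (fun x => componentEdges (biSub (twistedLift G c₁ d (voltage c₁ m d))
    (liftColoring c₁ d (voltage c₁ m d)) (x.2.val + 1) d) x) '' {x | c₁ s(x.1, m x.1) ≠ d}

lemma isBichromaticCycle_of_mem_rCycles [NeZero (d - 1)] (h2 : IsLegal G d c₂)
    (hm : ∀ u, G.Adj u (m u) ∧ c₂ s(u, m u) = d) {γ : Set (Sym2 (α × ZMod (d - 1)))}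
    (hγ : γ ∈ rCycles G c₁ m d) : ∃ i j, IsBichromaticCycle Ḡ c̄ i j γ := by
  obtain ⟨x, hx, rfl⟩ := hγ
  obtain ⟨hadj, hcol⟩ := lift_adj_partner h2 hm hx x.2
  have hne : x.2.val + 1 ≠ d := by
    have := ZMod.val_lt x.2
    omega
  exact ⟨_, _, isBichromaticCycle_componentEdges hne (biSub_adj.2 ⟨hadj, .inl hcol⟩)⟩

lemma rCycles_pairwise_disjoint [NeZero (d - 1)] (h1 : IsLegal G d c₁)
    (h2 : IsLegal G d c₂) (hm : ∀ u, G.Adj u (m u) ∧ c₂ s(u, m u) = d) :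
    (rCycles G c₁ m d).Pairwise Disjoint := by
  rintro _ ⟨⟨u, k⟩, hu, rfl⟩ _ ⟨⟨u', k'⟩, hu', rfl⟩ hne
  refine Set.disjoint_left.2 fun e he he' => hne ?_
  obtain ⟨v, hv⟩ : ∃ v, v ∈ e := ⟨e.out.1, Sym2.out_fst_mem e⟩
  have hk := (snd_eq_of_biSub_reachable h1 h2 hm hu
    (ConnectedComponent.exact (he.2 v hv).symm)).1
  have hk' := (snd_eq_of_biSub_reachable h1 h2 hm hu'
    (ConnectedComponent.exact (he'.2 v hv).symm)).1
  obtain rfl : k = k' := hk.symm.trans hk'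
  have hmk := (he.2 v hv).symm.trans (he'.2 v hv)
  simp only [componentEdges, hmk]

lemma sUnion_rCycles [NeZero (d - 1)] (h1 : IsLegal G d c₁)
    (h2 : IsLegal G d c₂) (hm : ∀ u, G.Adj u (m u) ∧ c₂ s(u, m u) = d) :
    ⋃₀ rCycles G c₁ m d = {e | e ∈ Ḡ.edgeSet ∧ Sym2.map Prod.fst e ∈ rEdges G c₁ c₂ d} := by
  ext e
  induction e with
  | _ v w =>
  constructor
  · rintro ⟨_, ⟨x, hx, rfl⟩, hvw, hmk⟩
    obtain ⟨hvx, hv⟩ := snd_eq_of_biSub_reachable h1 h2 hm hx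
      (ConnectedComponent.exact (hmk v (Sym2.mem_mk_left v w)).symm)
    rw [← hvx] at hvw
    exact ⟨(biSub_adj.1 hvw).1, (mem_rEdges_of_biSub_adj h1 h2 hm hv hvw).1⟩
  · rintro ⟨hvw, hr⟩
    have hv := color_partner_ne_of_mem_rEdges h1 h2 hm hvw.1 hr
    exact ⟨_, ⟨v, hv, rfl⟩, mk_mem_componentEdges
      (biSub_adj.2 ⟨hvw, (mem_rEdges_iff_liftColoring h1 h2 hm hv hvw).1 hr⟩)⟩

end RecoloredEdges

/-- There is a covering `p : Ḡ → G` with all fibers of size `d - 1` and a legal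
edge coloring `c̄` of `Ḡ` such that `(Ḡ, c₁∘p)[d] = (Ḡ, c̄)[d]` and the preimage of `G_r` is
a disjoint union of bi-chromatic cycles of `(Ḡ, c̄)`. -/
theorem statement_15 {V : Type} [Fintype V] (G : SimpleGraph V) (d : ℕ) (hd : 2 ≤ d)
    (c₁ c₂ : Sym2 V → ℕ) (hreg : RegularDeg G d)
    (h1 : IsLegal G d c₁) (h2 : IsLegal G d c₂) :
    ∃ (V' : Type) (_ : Fintype V') (G' : SimpleGraph V') (p : V' → V)
      (cbar : Sym2 V' → ℕ),
      IsCovering G' G p ∧ (∀ v : V, (p ⁻¹' {v}).ncard = d - 1) ∧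
      IsLegal G' d cbar ∧
      colorEdges G' (c₁ ∘ Sym2.map p) d = colorEdges G' cbar d ∧
      ∃ S : Set (Set (Sym2 V')),
        (∀ γ ∈ S, ∃ i j, IsBichromaticCycle G' cbar i j γ) ∧
        S.Pairwise Disjoint ∧
        ⋃₀ S = {e' | e' ∈ G'.edgeSet ∧ Sym2.map p e' ∈ rEdges G c₁ c₂ d} := by
  have : NeZero (d - 1) := ⟨by omega⟩
  choose m hm using fun u => h2.exists_adj_color_eq hreg u (j := d) (by simp; omega)
  exact ⟨_, inferInstance, twistedLift G c₁ d (voltage c₁ m d), Prod.fst,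
    liftColoring c₁ d (voltage c₁ m d), isCovering_twistedLift, ncard_fst_preimage,
    isLegal_liftColoring h1, colorEdges_liftColoring, rCycles G c₁ m d,
    fun _ => isBichromaticCycle_of_mem_rCycles h2 hm, rCycles_pairwise_disjoint h1 h2 hm,
    sUnion_rCycles h1 h2 hm⟩
end
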